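/- arXiv:1406.0569 — 2 statements merged into one kernel-verified Lean document; each statement's English description precedes it below -/
import Mathlib

section
/- Let (X, ω) be a symplectic vector space and (λ, μ) a Fredholm pair of Lagrangian subspaces with index 0. Then there exists a Lagrangian subspace μ̃ of X with X = λ ⊕ μ̃ and dim μ/(μ ∩ μ̃) = dim μ̃/(μ ∩ μ̃) = dim(λ ∩ μ). -/
/-!
Put `V = λ ∩ μ`. As `V ⊆ (λ + μ)^ω`, the form pairs `V` injectively into the conjugate dual
of any complement of `λ + μ`, and index `0` makes this pairing perfect. Correcting a complement
`W₀` by half of its `V`-component makes it isotropic. For the resulting isotropic complement `W`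
and `Y = (V ⊕ W)^ω`, every Lagrangian containing `V` splits as `V ⊕ (· ∩ Y)`, and
`μ̃ = (μ ∩ Y) ⊕ W` is the required Lagrangian: `μ ∩ μ̃ = μ ∩ Y`, so `μ/(μ ∩ μ̃) ≅ V` and
`μ̃/(μ ∩ μ̃) ≅ W`.
-/

/-- The annihilator `λ^ω = {y ∈ X : ω(x,y) = 0 for all x ∈ λ}` of a subspace of a
complex vector space with a sesquilinear form `ω` (linear in the first,
conjugate-linear in the second variable). -/
noncomputable def ann {X : Type*} [AddCommGroup X] [Module ℂ X]
    (ω : X →ₗ[ℂ] X →ₗ⋆[ℂ] ℂ) (l : Submodule ℂ X) : Submodule ℂ X :=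
  ⨅ x ∈ l, LinearMap.ker (ω x)

theorem Submodule.isCompl_map_of_sub_mem {R M : Type*} [Ring R] [AddCommGroup M] [Module R M]
    {A B : Submodule R M} (h : IsCompl A B) (f : M →ₗ[R] M) (hf : ∀ x, f x - x ∈ A) :
    IsCompl A (B.map f) := by
  refine ⟨disjoint_iff_inf_le.mpr ?_, codisjoint_iff_le_sup.mpr fun x _ ↦ ?_⟩
  · rintro _ ⟨hA, w, hw, rfl⟩
    have hwA : w ∈ A := by simpa using A.sub_mem hA (hf w)
    rw [(Submodule.disjoint_def.mp h.disjoint w hwA hw), map_zero]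
    exact zero_mem _
  · obtain ⟨a, ha, w, hw, rfl⟩ := Submodule.mem_sup.mp (h.codisjoint.eq_top ▸ trivial : x ∈ A ⊔ B)
    have hsplit : a + w = (a - (f w - w)) + f w := by abel
    rw [hsplit]
    exact Submodule.add_mem_sup (A.sub_mem ha (hf w)) ⟨w, hw, rfl⟩

theorem isCompl_inf_sup_of_isCompl_sup {α : Type*} [Lattice α] [BoundedOrder α]
    [IsModularLattice α] {a b y w : α} (hw : IsCompl (a ⊔ b) w) (hb : b ≤ a ⊓ b ⊔ b ⊓ y)
    (hy : Disjoint (a ⊓ b) y) : IsCompl a (b ⊓ y ⊔ w) := by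
  have htrace : (b ⊓ y ⊔ w) ⊓ (a ⊔ b) = b ⊓ y := by
    rw [sup_inf_assoc_of_le w (inf_le_left.trans le_sup_right), inf_comm w, hw.inf_eq_bot,
      sup_bot_eq]
  refine ⟨disjoint_iff_inf_le.mpr ?_, codisjoint_iff_le_sup.mpr ?_⟩
  · calc a ⊓ (b ⊓ y ⊔ w) ≤ a ⊓ ((b ⊓ y ⊔ w) ⊓ (a ⊔ b)) :=
          le_inf inf_le_left (le_inf inf_le_right (inf_le_left.trans le_sup_left))
      _ = a ⊓ b ⊓ y := by rw [htrace, inf_assoc]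
      _ ≤ ⊥ := hy.le_bot
  · calc ⊤ ≤ a ⊔ b ⊔ w := hw.codisjoint.top_le
      _ ≤ a ⊔ (b ⊓ y ⊔ w) := by
        refine sup_le (sup_le le_sup_left (hb.trans (sup_le ?_ ?_)))
          (le_sup_right.trans le_sup_right)
        · exact inf_le_left.trans le_sup_left
        · exact le_sup_left.trans le_sup_right

theorem Submodule.rank_map_mkQ_of_sup_eq {R M : Type*} [Ring R] [AddCommGroup M] [Module R M]
    {p q K : Submodule R M} (hqK : Disjoint q K) (hp : q ⊔ K = p) :
    Module.rank R (p.map K.mkQ) = Module.rank R q := by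
  rw [← hp, Submodule.map_sup, Submodule.mkQ_map_self, sup_bot_eq, ← LinearMap.range_domRestrict]
  exact rank_range_of_injective _
    (LinearMap.injective_domRestrict_iff.mpr (by rwa [Submodule.ker_mkQ]))

section Symplectic

variable {X : Type*} [AddCommGroup X] [Module ℂ X] {ω : X →ₗ[ℂ] X →ₗ⋆[ℂ] ℂ}
  {p q : Submodule ℂ X}

theorem mem_ann {x : X} : x ∈ ann ω p ↔ ∀ y ∈ p, ω y x = 0 := by
  simp [ann, Submodule.mem_iInf, LinearMap.mem_ker]

theorem ann_anti (h : p ≤ q) : ann ω q ≤ ann ω p :=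
  fun _ hx ↦ mem_ann.mpr fun y hy ↦ mem_ann.mp hx y (h hy)

theorem ann_sup : ann ω (p ⊔ q) = ann ω p ⊓ ann ω q := by
  refine le_antisymm (le_inf (ann_anti le_sup_left) (ann_anti le_sup_right)) ?_
  rintro x ⟨hp, hq⟩
  refine mem_ann.mpr fun y hy ↦ ?_
  obtain ⟨a, ha, b, hb, rfl⟩ := Submodule.mem_sup.mp hy
  rw [map_add, LinearMap.add_apply, mem_ann.mp hp a ha, mem_ann.mp hq b hb, add_zero]

theorem isRefl_of_skew (hskew : ∀ x y, ω y x = -(starRingEnd ℂ) (ω x y)) : ω.IsRefl :=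
  fun _ _ h ↦ by rw [hskew, h, map_zero, neg_zero]

theorem le_ann_comm (hrefl : ω.IsRefl) : p ≤ ann ω q ↔ q ≤ ann ω p :=
  ⟨fun h y hy ↦ mem_ann.mpr fun _ hx ↦ hrefl _ _ (mem_ann.mp (h hx) y hy),
   fun h x hx ↦ mem_ann.mpr fun _ hy ↦ hrefl _ _ (mem_ann.mp (h hy) x hx)⟩

theorem ann_top (hrefl : ω.IsRefl) (hsep : ω.SeparatingLeft) : ann ω ⊤ = ⊥ :=
  eq_bot_iff.mpr fun x hx ↦ (Submodule.mem_bot ℂ).mpr <|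
    hsep x fun y ↦ hrefl _ _ (mem_ann.mp hx y trivial)

theorem disjoint_ann_of_isCompl (hrefl : ω.IsRefl) (hsep : ω.SeparatingLeft)
    {V A B : Submodule ℂ X} (hV : V ≤ ann ω A) (hAB : IsCompl A B) : Disjoint V (ann ω B) := by
  rw [disjoint_iff, eq_bot_iff, ← ann_top hrefl hsep, ← hAB.sup_eq_top, ann_sup]
  exact inf_le_inf_right _ hV

theorem sup_le_ann_sup (hrefl : ω.IsRefl) (hp : p ≤ ann ω p) (hq : q ≤ ann ω q)
    (hpq : q ≤ ann ω p) : p ⊔ q ≤ ann ω (p ⊔ q) := by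
  rw [ann_sup]
  exact sup_le (le_inf hp ((le_ann_comm hrefl).mp hpq)) (le_inf hpq hq)

theorem exists_linearMap_pairing_eq (hrefl : ω.IsRefl) {V B : Submodule ℂ X}
    [FiniteDimensional ℂ V] [FiniteDimensional ℂ B]
    (hdim : Module.finrank ℂ V = Module.finrank ℂ B) (hV : Disjoint V (ann ω B)) :
    ∃ π : X →ₗ[ℂ] V, ∀ x, ∀ w ∈ B, ω (π x) w = ω x w := by
  let b := Module.finBasis ℂ B
  let coords : X →ₗ[ℂ] Fin (Module.finrank ℂ B) → ℂ := LinearMap.pi fun i ↦ ω.flip (b i)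
  have agree_of_basis : ∀ x y : X, (∀ i, ω x (b i) = ω y (b i)) → ∀ w ∈ B, ω x w = ω y w :=
    fun x y h w hw ↦ LinearMap.congr_fun (b.ext (f₁ := (ω x).comp B.subtype)
      (f₂ := (ω y).comp B.subtype) h) ⟨w, hw⟩
  have hinj : Function.Injective (coords.domRestrict V) := by
    refine LinearMap.ker_eq_bot.mp (eq_bot_iff.mpr fun v hv ↦ ?_)
    have hvB : (v : X) ∈ ann ω B := mem_ann.mpr fun w hw ↦ hrefl _ _ <| by
      simpa using agree_of_basis v 0 (fun i ↦ by simpa [coords] using congrFun hv i) w hw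
    simpa using hV.le_bot ⟨v.2, hvB⟩
  have hbij : Function.Bijective (coords.domRestrict V) :=
    ⟨hinj, (LinearMap.injective_iff_surjective_of_finrank_eq_finrank (by simpa using hdim)).mp hinj⟩
  let e := LinearEquiv.ofBijective _ hbij
  refine ⟨e.symm.toLinearMap ∘ₗ coords, fun x ↦ agree_of_basis _ _ fun i ↦ ?_⟩
  exact congrFun (e.apply_symm_apply (coords x)) i

theorem exists_isotropic_isCompl (hskew : ∀ x y, ω y x = -(starRingEnd ℂ) (ω x y))
    {A V W₀ : Submodule ℂ X} (hVA : V ≤ A) (hV : V ≤ ann ω V) (hW₀ : IsCompl A W₀)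
    (π : X →ₗ[ℂ] V) (hπ : ∀ x, ∀ w ∈ W₀, ω (π x) w = ω x w) :
    ∃ W, IsCompl A W ∧ W ≤ ann ω W := by
  -- subtracting half of the `V`-component kills the form on `W₀`
  let f : X →ₗ[ℂ] X := LinearMap.id - (2⁻¹ : ℂ) • V.subtype ∘ₗ π
  refine ⟨W₀.map f, Submodule.isCompl_map_of_sub_mem hW₀ f fun x ↦ ?_, ?_⟩
  · simpa [f] using hVA (V.smul_mem (2⁻¹ : ℂ) (π x).2)
  · rintro _ ⟨w, hw, rfl⟩
    refine mem_ann.mpr ?_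
    rintro _ ⟨w', hw', rfl⟩
    have hVV : ω (π w') (π w) = 0 := mem_ann.mp (hV (π w).2) _ (π w').2
    have hleft : ω (π w') w = ω w' w := hπ w' w hw
    have hright : ω w' (π w) = ω w' w := by
      rw [hskew, hπ w w' hw', hskew w', map_neg, Complex.conj_conj, neg_neg]
    simp only [f, LinearMap.sub_apply, LinearMap.id_apply, LinearMap.smul_apply,
      LinearMap.comp_apply, Submodule.subtype_apply, map_sub, map_smul, map_smulₛₗ, hVV, hleft,
      hright]
    rw [map_inv₀, map_ofNat, smul_zero, sub_zero, smul_eq_mul]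
    ring

theorem le_sup_inf_ann (hrefl : ω.IsRefl) {V W p : Submodule ℂ X} (π : X →ₗ[ℂ] V)
    (hπ : ∀ x, ∀ w ∈ W, ω (π x) w = ω x w) (hVp : V ≤ p) (hp : p ≤ ann ω p) :
    p ≤ V ⊔ p ⊓ ann ω (V ⊔ W) := by
  intro x hx
  have hxV : x - π x ∈ p := p.sub_mem hx (hVp (π x).2)
  have hxW : x - π x ∈ ann ω W := mem_ann.mpr fun w hw ↦ hrefl _ _ <| by
    rw [map_sub, LinearMap.sub_apply, hπ x w hw, sub_self]
  have hsplit : x = π x + (x - π x) := by abel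
  rw [hsplit]
  refine Submodule.add_mem_sup (π x).2 ⟨hxV, ?_⟩
  rw [ann_sup]
  exact ⟨ann_anti hVp (hp hxV), hxW⟩

theorem inf_ann_sup_sup_eq_ann {l m W : Submodule ℂ X} (hrefl : ω.IsRefl) (hl : l = ann ω l)
    (hm : m = ann ω m) (hW : W ≤ ann ω W) (hVW : Disjoint (l ⊓ m) (ann ω W))
    (hmdec : m ≤ l ⊓ m ⊔ m ⊓ ann ω (l ⊓ m ⊔ W))
    (hcod : Codisjoint l (m ⊓ ann ω (l ⊓ m ⊔ W) ⊔ W)) :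
    m ⊓ ann ω (l ⊓ m ⊔ W) ⊔ W = ann ω (m ⊓ ann ω (l ⊓ m ⊔ W) ⊔ W) := by
  set K := m ⊓ ann ω (l ⊓ m ⊔ W)
  have hK : K ≤ ann ω K := inf_le_left.trans (hm.le.trans (ann_anti inf_le_left))
  have hKW : K ≤ ann ω W := inf_le_right.trans (ann_anti le_sup_right)
  have hiso : K ⊔ W ≤ ann ω (K ⊔ W) := sup_le_ann_sup hrefl hK hW ((le_ann_comm hrefl).mp hKW)
  have hlK : l ⊓ ann ω K ≤ m := calc
    l ⊓ ann ω K ≤ ann ω (l ⊓ m) ⊓ ann ω K :=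
        inf_le_inf_right _ (hl.le.trans (ann_anti inf_le_left))
    _ = ann ω (l ⊓ m ⊔ K) := ann_sup.symm
    _ ≤ m := (ann_anti hmdec).trans hm.ge
  have hdisj : Disjoint l (ann ω (K ⊔ W)) := by
    rw [ann_sup, disjoint_iff_inf_le, ← inf_assoc]
    exact (inf_le_inf_right _ (le_inf inf_le_left hlK)).trans hVW.le_bot
  exact (le_iff_eq_of_codisjoint_of_disjoint hcod.symm hdisj).mp hiso

end Symplectic

/-- For a Fredholm pair `(λ,μ)` of Lagrangian subspaces of index `0`,
there exists a Lagrangian `μ̃` with `X = λ ⊕ μ̃` and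
`dim μ/(μ∩μ̃) = dim μ̃/(μ∩μ̃) = dim (λ∩μ)`. -/
theorem exists_complementary_lagrangian {X : Type*} [AddCommGroup X] [Module ℂ X]
    (ω : X →ₗ[ℂ] X →ₗ⋆[ℂ] ℂ)
    (hskew : ∀ x y, ω y x = - (starRingEnd ℂ) (ω x y))
    (hnd : ∀ x, (∀ y, ω x y = 0) → x = 0)
    (l m : Submodule ℂ X)
    (hl : l = ann ω l) (hm : m = ann ω m)
    [FiniteDimensional ℂ ↥(l ⊓ m)] [FiniteDimensional ℂ (X ⧸ (l ⊔ m))]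
    (hidx : Module.finrank ℂ ↥(l ⊓ m) = Module.finrank ℂ (X ⧸ (l ⊔ m))) :
    ∃ t : Submodule ℂ X, t = ann ω t ∧ IsCompl l t ∧
      Module.rank ℂ ↥(m.map (m ⊓ t).mkQ) = Module.rank ℂ ↥(l ⊓ m) ∧
      Module.rank ℂ ↥(t.map (m ⊓ t).mkQ) = Module.rank ℂ ↥(l ⊓ m) := by
  have hrefl := isRefl_of_skew hskew
  have hV : l ⊓ m ≤ ann ω (l ⊔ m) := ann_sup (ω := ω) ▸ inf_le_inf hl.le hm.le
  have hcomplDim : ∀ W, IsCompl (l ⊔ m) W →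
      FiniteDimensional ℂ W ∧ Module.finrank ℂ ↥(l ⊓ m) = Module.finrank ℂ W := fun W hW ↦
    let e := Submodule.quotientEquivOfIsCompl _ _ hW
    ⟨e.finiteDimensional, hidx.trans e.finrank_eq⟩
  obtain ⟨W₀, hW₀⟩ := (l ⊔ m).exists_isCompl
  obtain ⟨_, hdimW₀⟩ := hcomplDim W₀ hW₀
  obtain ⟨π₀, hπ₀⟩ :=
    exists_linearMap_pairing_eq hrefl hdimW₀ (disjoint_ann_of_isCompl hrefl hnd hV hW₀)
  obtain ⟨W, hW, hWiso⟩ := exists_isotropic_isCompl hskew (inf_le_left.trans le_sup_left)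
    (inf_le_left.trans (hl.le.trans (ann_anti inf_le_left))) hW₀ π₀ hπ₀
  obtain ⟨_, hdimW⟩ := hcomplDim W hW
  have hVW := disjoint_ann_of_isCompl hrefl hnd hV hW
  obtain ⟨π, hπ⟩ := exists_linearMap_pairing_eq hrefl hdimW hVW
  set Y := ann ω (l ⊓ m ⊔ W)
  have hmdec : m ≤ l ⊓ m ⊔ m ⊓ Y := le_sup_inf_ann hrefl π hπ inf_le_right hm.le
  have hVY : Disjoint (l ⊓ m) Y := hVW.mono_right (ann_anti le_sup_right)
  have hmW : Disjoint m W := hW.disjoint.mono_left le_sup_right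
  have hcompl := isCompl_inf_sup_of_isCompl_sup hW hmdec hVY
  have hmt : m ⊓ (m ⊓ Y ⊔ W) = m ⊓ Y := by
    rw [inf_comm m, sup_inf_assoc_of_le _ inf_le_left, inf_comm W, hmW.eq_bot, sup_bot_eq]
  refine ⟨m ⊓ Y ⊔ W, inf_ann_sup_sup_eq_ann hrefl hl hm hWiso hVW hmdec hcompl.codisjoint, hcompl,
    ?_, ?_⟩
  · rw [hmt]
    exact Submodule.rank_map_mkQ_of_sup_eq (hVY.mono_right inf_le_right)
      (le_antisymm (sup_le inf_le_right inf_le_left) hmdec)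
  · rw [hmt, Submodule.rank_map_mkQ_of_sup_eq (hmW.symm.mono_right inf_le_left) (sup_comm _ _)]
    exact (LinearEquiv.ofFinrankEq _ _ hdimW).rank_eq.symm
end

section
/- Let (X, ω) be a symplectic vector space with symplectic subspaces X₀, X₁ such that X = X₀ ⊕ X₁ and X₀ = X₁^ω. If λ is a Lagrangian subspace of X such that λ ∩ X₀ is Lagrangian in X₀, then λ ∩ X₁ is Lagrangian in X₁ and λ = (λ ∩ X₀) ⊕ (λ ∩ X₁). -/
universe u

lemma mem_ann_iff {X : Type*} [AddCommGroup X] [Module ℂ X]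
    (ω : X →ₗ[ℂ] X →ₗ⋆[ℂ] ℂ) (l : Submodule ℂ X) (z : X) :
    z ∈ ann ω l ↔ ∀ y ∈ l, ω y z = 0 := by
  simp [ann, Submodule.mem_iInf, LinearMap.mem_ker]

/-- Let `X = X₀ ⊕ X₁` with `X₀`, `X₁` symplectic subspaces and
`X₀ = X₁^ω`. If `λ` is Lagrangian in `X` and `λ ∩ X₀` is Lagrangian in `X₀`
(expressed as `λ ∩ X₀ = (λ∩X₀)^ω ∩ X₀`), then `λ ∩ X₁` is Lagrangian in `X₁` and
`λ = (λ ∩ X₀) ⊕ (λ ∩ X₁)`. -/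
theorem lagrangian_splits {X : Type*} [AddCommGroup X] [Module ℂ X]
    (ω : X →ₗ[ℂ] X →ₗ⋆[ℂ] ℂ)
    (hskew : ∀ x y, ω y x = - (starRingEnd ℂ) (ω x y))
    (hnd : ∀ x, (∀ y, ω x y = 0) → x = 0)
    (X₀ X₁ l : Submodule ℂ X)
    (h0 : X₀ ⊓ ann ω X₀ = ⊥) (h1 : X₁ ⊓ ann ω X₁ = ⊥)
    (hcompl : IsCompl X₀ X₁) (h01 : X₀ = ann ω X₁)
    (hl : l = ann ω l)
    (hl0 : l ⊓ X₀ = ann ω (l ⊓ X₀) ⊓ X₀) :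
    l ⊓ X₁ = ann ω (l ⊓ X₁) ⊓ X₁ ∧
    l = (l ⊓ X₀) ⊔ (l ⊓ X₁) ∧ (l ⊓ X₀) ⊓ (l ⊓ X₁) = ⊥ := by
  have hzero : ∀ x y : X, ω x y = 0 → ω y x = 0 := by
    intro x y h
    rw [hskew x y, h]
    simp
  -- X₁ ⊆ ann X₀
  have hX1ann : X₁ ≤ ann ω X₀ := by
    intro z hz
    rw [mem_ann_iff]
    intro y hy
    rw [h01, mem_ann_iff] at hy
    exact hzero z y (hy z hz)
  -- the sup statement
  have hsup : l = (l ⊓ X₀) ⊔ (l ⊓ X₁) := by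
    apply le_antisymm
    · intro x hx
      have hxT : x ∈ X₀ ⊔ X₁ := by rw [hcompl.sup_eq_top]; trivial
      obtain ⟨x₀, hx₀, x₁, hx₁, hxeq⟩ := Submodule.mem_sup.mp hxT
      have hx0l : x₀ ∈ l := by
        have hmem : x₀ ∈ ann ω (l ⊓ X₀) ⊓ X₀ := by
          refine ⟨?_, hx₀⟩
          show x₀ ∈ ann ω (l ⊓ X₀)
          rw [mem_ann_iff]
          intro y hy
          have hyx : ω y x = 0 := by
            have hx' : x ∈ ann ω l := hl ▸ hx
            exact (mem_ann_iff ω l x).mp hx' y hy.1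
          have hyx1 : ω y x₁ = 0 :=
            (mem_ann_iff ω X₀ x₁).mp (hX1ann hx₁) y hy.2
          have : (ω y) x₀ = (ω y) x - (ω y) x₁ := by
            rw [← hxeq, map_add]; ring
          rw [this, hyx, hyx1, sub_zero]
        rw [← hl0] at hmem
        exact hmem.1
      have hx1l : x₁ ∈ l := by
        have : x₁ = x - x₀ := by rw [← hxeq]; abel
        rw [this]
        exact l.sub_mem hx hx0l
      exact Submodule.mem_sup.mpr ⟨x₀, ⟨hx0l, hx₀⟩, x₁, ⟨hx1l, hx₁⟩, hxeq⟩
    · exact sup_le inf_le_left inf_le_left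
  refine ⟨?_, hsup, ?_⟩
  · -- l ⊓ X₁ Lagrangian in X₁
    apply le_antisymm
    · intro z hz
      refine ⟨?_, hz.2⟩
      show z ∈ ann ω (l ⊓ X₁)
      rw [mem_ann_iff]
      intro y hy
      have hz' : z ∈ ann ω l := hl ▸ hz.1
      exact (mem_ann_iff ω l z).mp hz' y hy.1
    · intro z hz
      refine ⟨?_, hz.2⟩
      show z ∈ l
      rw [hl, mem_ann_iff]
      intro y hy
      obtain ⟨y₀, hy₀, y₁, hy₁, hyeq⟩ := Submodule.mem_sup.mp (hsup ▸ hy)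
      have h0' : ω y₀ z = 0 := by
        have hy0' : y₀ ∈ ann ω X₁ := h01 ▸ hy₀.2
        exact hzero z y₀ ((mem_ann_iff ω X₁ y₀).mp hy0' z hz.2)
      have h1' : ω y₁ z = 0 := (mem_ann_iff ω (l ⊓ X₁) z).mp hz.1 y₁ hy₁
      have : ω y z = ω y₀ z + ω y₁ z := by
        rw [← hyeq, map_add, LinearMap.add_apply]
      rw [this, h0', h1', add_zero]
  · rw [eq_bot_iff]
    intro x hx
    have hx' : x ∈ X₀ ⊓ X₁ := ⟨hx.1.2, hx.2.2⟩
    rw [hcompl.inf_eq_bot] at hx'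
    exact hx'
end
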